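/- Let f, h : [0,∞)×ℝ⁴ → ℝ be L¹-Carathéodory functions, let (I_{0k})_k, (I_{1k})_k, (J_{0j})_j, (J_{1j})_j be Carathéodory sequences of functions [0,∞)×ℝ² → ℝ, let (t_k), (τ_j) be strictly increasing sequences of positive reals tending to +∞, and let A₁, A₂, B₁, B₂ ∈ ℝ. Suppose u ∈ X₁ (with impulse points (t_k)) and v ∈ X₂ (with impulse points (τ_j)) satisfy sup_t |u(t)|/(1+t) < ρ, sup_t |u'(t)| < ρ, sup_t |v(t)|/(1+t) < ρ, sup_t |v'(t)| < ρ for some ρ > 0, and that (u,v) solves the impulsive boundary value problem: u''(t) = f(t,u(t),v(t),u'(t),v'(t)) for a.e. t with t ∉ {t_k}, v''(t) = h(t,u(t),v(t),u'(t),v'(t)) for a.e. t with t ∉ {τ_j}, u(0) = A₁, v(0) = A₂, lim_{t→+∞} u'(t) = B₁, lim_{t→+∞} v'(t) = B₂, together with the jump conditions u(t_k⁺) - u(t_k⁻) = I_{0k}(t_k,u(t_k),u'(t_k)), u'(t_k⁺) - u'(t_k⁻) = I_{1k}(t_k,u(t_k),u'(t_k)), v(τ_j⁺) - v(τ_j⁻)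 = J_{0j}(τ_j,v(τ_j),v'(τ_j)), v'(τ_j⁺) - v'(τ_j⁻) = J_{1j}(τ_j,v(τ_j),v'(τ_j)) for all k, j ∈ ℕ (with u' absolutely continuous on each interval between consecutive impulse points, and similarly for v'). Then for every t ∈ [0,∞): u(t) = A₁ + B₁ t + Σ_{k : t_k < t} [I_{0k}(t_k,u(t_k),u'(t_k)) + I_{1k}(t_k,u(t_k),u'(t_k))(t - t_k)] - t Σ_{k=1}^{∞} I_{1k}(t_k,u(t_k),u'(t_k)) + ∫₀^{+∞} G(t,s) f(s,u(s),v(s),u'(s),v'(s)) ds, and the analogous representation holds for v with A₂, B₂, J_{0j}, J_{1j} and h. -/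

import Mathlib

open MeasureTheory Set Filter Topology

/-- `g : [0,∞) × ℝ⁴ → ℝ` is an `L¹`-Carathéodory function:
(i) `t ↦ g(t,x,y,z,w)` is measurable for each `(x,y,z,w)`;
(ii) `(x,y,z,w) ↦ g(t,x,y,z,w)` is continuous for a.e. `t ∈ [0,∞)`;
(iii) for each `ρ > 0` there is a nonnegative `φ_ρ ∈ L¹([0,∞))` dominating `g`
on the region `|x| ≤ ρ(1+t)`, `|y| ≤ ρ(1+t)`, `|z| ≤ ρ`, `|w| ≤ ρ`. -/
def L1Caratheodory (g : ℝ → ℝ → ℝ → ℝ → ℝ → ℝ) : Prop :=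
  (∀ x y z w : ℝ, Measurable fun t => g t x y z w) ∧
  (∀ᵐ t ∂(volume.restrict (Ici (0:ℝ))),
    Continuous fun p : ℝ × ℝ × ℝ × ℝ => g t p.1 p.2.1 p.2.2.1 p.2.2.2) ∧
  (∀ ρ : ℝ, 0 < ρ → ∃ φ : ℝ → ℝ, (∀ t, 0 ≤ φ t) ∧ IntegrableOn φ (Ici 0) ∧
    ∀ᵐ t ∂(volume.restrict (Ici (0:ℝ))), ∀ x y z w : ℝ,
      |x| ≤ ρ * (1 + t) → |y| ≤ ρ * (1 + t) → |z| ≤ ρ → |w| ≤ ρ →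
        |g t x y z w| ≤ φ t)

/-- A Carathéodory sequence `(c_n)` of functions `[0,∞) × ℝ² → ℝ`:
each `(a,b) ↦ c_n(t,a,b)` is continuous, and for each `ρ > 0` there are nonnegative
summable constants `χ_{n,ρ}` with `|c_n(t,a,b)| ≤ χ_{n,ρ}` whenever `|a| < ρ(1+t)`
and `|b| < ρ`. -/
def CaratheodorySeq (c : ℕ → ℝ → ℝ → ℝ → ℝ) : Prop :=
  (∀ n t, Continuous fun p : ℝ × ℝ => c n t p.1 p.2) ∧
  ∀ ρ : ℝ, 0 < ρ → ∃ χ : ℕ → ℝ, (∀ n, 0 ≤ χ n) ∧ Summable χ ∧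
    ∀ (n : ℕ) (t a b : ℝ), |a| < ρ * (1 + t) → |b| < ρ → |c n t a b| ≤ χ n

/-- Piecewise continuity with respect to the impulse points `(t_k)`:
continuous on `[0,∞)` off the impulse points, left-continuous at each `t_k`,
with finite right limits at each `t_k`. -/
def PCPiece (tseq : ℕ → ℝ) (u : ℝ → ℝ) : Prop :=
  (∀ t ∈ Ici (0:ℝ), t ∉ range tseq → ContinuousWithinAt u (Ici 0) t) ∧
  (∀ k, Tendsto u (𝓝[<] (tseq k)) (𝓝 (u (tseq k)))) ∧
  (∀ k, ∃ L : ℝ, Tendsto u (𝓝[>] (tseq k)) (𝓝 L))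

/-- `u ∈ X₁` (resp. `X₂`) with derivative `u'`: `u` is `PC¹` with respect to the impulse
points `(t_k)` (piecewise continuous, differentiable off the impulse points with
piecewise continuous derivative `u'`), and both `u(t)/(1+t)` and `u'(t)` have finite
limits at `+∞`. -/
def MemX (tseq : ℕ → ℝ) (u u' : ℝ → ℝ) : Prop :=
  PCPiece tseq u ∧
  (∀ t ∈ Ici (0:ℝ), t ∉ range tseq → HasDerivWithinAt u (u' t) (Ici 0) t) ∧
  PCPiece tseq u' ∧
  (∃ L : ℝ, Tendsto (fun t => u t / (1 + t)) atTop (𝓝 L)) ∧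
  (∃ L : ℝ, Tendsto u' atTop (𝓝 L))

lemma measurable_comp_simpleFunc {α E : Type*} [MeasurableSpace α] [MeasurableSpace E]
    (f : α → E → ℝ) (hf : ∀ p : E, Measurable fun t => f t p)
    (s : SimpleFunc α E) : Measurable fun t => f t (s t) := by
  classical
  have h : ∀ t, f t (s t) = ∑ c ∈ s.range, if s t = c then f t c else 0 := by
    intro t
    rw [Finset.sum_ite_eq s.range (s t) fun c => f t c,
      if_pos (SimpleFunc.mem_range_self s t)]
  simp only [h]
  exact Finset.measurable_sum _ fun c _ =>
    Measurable.ite (s.measurableSet_fiber c) (hf c) measurable_const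

lemma caratheodory_aemeasurable {μ : Measure ℝ}
    (f : ℝ → (ℝ × ℝ × ℝ × ℝ) → ℝ)
    (hmeas : ∀ p, Measurable fun t => f t p)
    (hcont : ∀ᵐ t ∂μ, Continuous (f t))
    {g : ℝ → ℝ × ℝ × ℝ × ℝ} (hg : AEMeasurable g μ) :
    AEMeasurable (fun t => f t (g t)) μ := by
  classical
  have hsm : StronglyMeasurable (hg.mk g) := hg.measurable_mk.stronglyMeasurable
  refine aemeasurable_of_tendsto_metrizable_ae atTop
    (f := fun n t => f t (hsm.approx n t))
    (fun n => (measurable_comp_simpleFunc f hmeas _).aemeasurable) ?_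
  filter_upwards [hcont, hg.ae_eq_mk] with t ht hteq
  rw [hteq]
  exact (ht.tendsto _).comp (hsm.tendsto_approx t)

lemma pc_aemeasurable (tseq : ℕ → ℝ) (u : ℝ → ℝ)
    (hc : ∀ t ∈ Ici (0:ℝ), t ∉ range tseq → ContinuousWithinAt u (Ici 0) t) :
    AEMeasurable u (volume.restrict (Ici (0:ℝ))) := by
  set s : Set ℝ := Ici 0 \ range tseq with hs
  have hmeas : MeasurableSet s :=
    measurableSet_Ici.diff (countable_range tseq).measurableSet
  have hcont : ContinuousOn u s := fun t ht => (hc t ht.1 ht.2).mono diff_subset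
  have h1 : AEMeasurable u (volume.restrict s) := hcont.aemeasurable hmeas
  have hse : s =ᵐ[volume] (Ici (0:ℝ)) := by
    rw [Filter.eventuallyEq_set]
    have hn : volume (range tseq) = 0 := (countable_range tseq).measure_zero _
    filter_upwards [measure_eq_zero_iff_ae_notMem.mp hn] with x hx
    simp only [hs, mem_diff]
    tauto
  rwa [Measure.restrict_congr_set hse] at h1

lemma main_aux
    (F : ℝ → ℝ) (hFm : Measurable F) (hFi : IntegrableOn F (Ici (0:ℝ)))
    (tseq : ℕ → ℝ) (htm : StrictMono tseq) (htp : ∀ k, 0 < tseq k)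
    (htt : Tendsto tseq atTop atTop)
    (u u' : ℝ → ℝ) (A B : ℝ) (a b : ℕ → ℝ)
    (hucont : ∀ t ∈ Ici (0:ℝ), t ∉ range tseq → ContinuousWithinAt u (Ici 0) t)
    (hulc : ∀ k, Tendsto u (𝓝[<] (tseq k)) (𝓝 (u (tseq k))))
    (hderiv : ∀ t ∈ Ici (0:ℝ), t ∉ range tseq → HasDerivWithinAt u (u' t) (Ici 0) t)
    (hu'c : ∀ t ∈ Ici (0:ℝ), t ∉ range tseq → ContinuousWithinAt u' (Ici 0) t)
    (hu'lc : ∀ k, Tendsto u' (𝓝[<] (tseq k)) (𝓝 (u' (tseq k))))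
    (ρ : ℝ) (hbd : ∀ t ∈ Ici (0:ℝ), |u' t| ≤ ρ)
    (hAC : ∀ x y : ℝ, 0 ≤ x → x ≤ y → (∀ k, ¬(x < tseq k ∧ tseq k ≤ y)) →
      u' y - u' x = ∫ s in x..y, F s)
    (huB : Tendsto u' atTop (𝓝 B)) (hu0 : u 0 = A)
    (hj0 : ∀ k, Tendsto u (𝓝[>] (tseq k)) (𝓝 (u (tseq k) + b k)))
    (hj1 : ∀ k, Tendsto u' (𝓝[>] (tseq k)) (𝓝 (u' (tseq k) + a k))) :
    ∀ t ∈ Ici (0:ℝ), u t = A + B * t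
      + ((∑' k, if tseq k < t then b k + a k * (t - tseq k) else 0) - t * ∑' k, a k)
      + ∫ s in Ioi (0:ℝ), (-(min t s)) * F s := by
  classical
  have hmu' : AEMeasurable u' (volume.restrict (Ici (0:ℝ))) := pc_aemeasurable tseq u' hu'c
  -- interval integrability of F and u'
  have hFii : ∀ x y : ℝ, 0 ≤ x → 0 ≤ y → IntervalIntegrable F volume x y := by
    intro x y hx hy
    rw [intervalIntegrable_iff]
    refine hFi.mono_set fun s hs => ?_
    rcases le_or_gt x y with hxy | hxy
    · rw [uIoc_of_le hxy] at hs; exact hx.trans hs.1.le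
    · rw [uIoc_of_ge hxy.le] at hs; exact (hy.trans_lt hs.1).le
  have hu'ii : ∀ x y : ℝ, 0 ≤ x → x ≤ y → IntervalIntegrable u' volume x y := by
    intro x y hx hxy
    rw [intervalIntegrable_iff_integrableOn_Ioc_of_le hxy]
    have hsub : Ioc x y ⊆ Ici (0:ℝ) := fun s hs => (hx.trans hs.1.le : (0:ℝ) ≤ s)
    refine Integrable.mono' (g := fun _ => ρ)
      (integrableOn_const measure_Ioc_lt_top.ne)
      ((hmu'.mono_measure (Measure.restrict_mono hsub le_rfl)).aestronglyMeasurable) ?_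
    rw [ae_restrict_iff' measurableSet_Ioc]
    exact Eventually.of_forall fun s hs => by
      simpa [Real.norm_eq_abs] using hbd s (hsub hs)
  -- finitely many impulses below any level
  have hfin : ∀ y : ℝ, ∃ m : ℕ, ∀ k, m ≤ k → y < tseq k := by
    intro y
    obtain ⟨m, hm⟩ := (htt.eventually (eventually_gt_atTop y)).exists_forall_of_atTop
    exact ⟨m, hm⟩
  -- step B : FTC for u' across impulses
  have key : ∀ n : ℕ, ∀ x y : ℝ, 0 ≤ x → x ≤ y →
      (∀ k, n ≤ k → ¬(x < tseq k ∧ tseq k ≤ y)) →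
      u' y - u' x = ∫ s in x..y, F s := by
    intro n
    induction n with
    | zero => exact fun x y hx hxy hno => hAC x y hx hxy fun k => hno k (Nat.zero_le k)
    | succ n ih =>
      intro x y hx hxy hno
      by_cases hc : x < tseq n ∧ tseq n ≤ y
      · set c := tseq n with hcdef
        have hxc : x < c := hc.1
        have hcy : c ≤ y := hc.2
        have hc0 : (0:ℝ) ≤ c := (htp n).le
        -- right part [c, y] : no impulses in (c, y]
        have hright : u' y - u' c = ∫ s in c..y, F s := by
          refine hAC c y hc0 hcy fun k hk => ?_
          have hkn : n < k := by
            by_contra hle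
            push_neg at hle
            exact absurd (htm.monotone hle) (not_le.mpr hk.1)
          exact hno k hkn ⟨hxc.trans hk.1, hk.2⟩
        -- left part [x, c] : by IH on [x, z], z < c, and left limits
        have hleft : u' c - u' x = ∫ s in Ioc x c, F s := by
          have hev : ∀ᶠ z in 𝓝[<] c, u' z - u' x = ∫ s in Ioc x z, F s := by
            filter_upwards [Ioo_mem_nhdsLT_of_mem (show c ∈ Ioc x c from ⟨hxc, le_rfl⟩)]
              with z hz
            have h1 : u' z - u' x = ∫ s in x..z, F s := by
              refine ih x z hx hz.1.le fun k hk => ?_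
              rintro ⟨hk1, hk2⟩
              exact absurd (hk2.trans_lt hz.2) (not_lt.mpr (htm.monotone hk))
            rw [h1, intervalIntegral.integral_of_le hz.1.le]
          have hlhs : Tendsto (fun z => u' z - u' x) (𝓝[<] c) (𝓝 (u' c - u' x)) :=
            (hu'lc n).sub_const (u' x)
          have hrhs : Tendsto (fun z => ∫ s in Ioc x z, F s) (𝓝[<] c)
              (𝓝 (∫ s in Ioc x c, F s)) := by
            have hcont := intervalIntegral.continuousOn_primitive
              (f := F) (μ := volume) (a := x) (b := c)
              (hFi.mono_set fun s hs => hx.trans hs.1)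
            have := (hcont c ⟨hxc.le, le_rfl⟩).mono (Ioo_subset_Icc_self (a := x) (b := c))
            rw [← nhdsWithin_Ioo_eq_nhdsLT hxc]
            exact this
          exact tendsto_nhds_unique (Tendsto.congr' hev hlhs) hrhs
        have hadj := intervalIntegral.integral_add_adjacent_intervals
          (hFii x c hx hc0) (hFii c y hc0 (hx.trans hxy))
        have hxc' : (∫ s in Ioc x c, F s) = ∫ s in x..c, F s :=
          (intervalIntegral.integral_of_le hxc.le).symm
        rw [← hadj]
        linarith [hleft, hright, hxc']
      · refine ih x y hx hxy fun k hk => ?_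
        rcases eq_or_lt_of_le hk with rfl | h
        · exact hc
        · exact hno k h
  have stepB : ∀ x y : ℝ, 0 ≤ x → x ≤ y → u' y - u' x = ∫ s in x..y, F s := by
    intro x y hx hxy
    obtain ⟨m, hm⟩ := hfin y
    exact key m x y hx hxy fun k hk => fun hcon => absurd hcon.2 (not_le.mpr (hm k hk))
  -- jumps of u' vanish
  have ha0 : ∀ k, a k = 0 := by
    intro k
    set c := tseq k with hcdef
    have hck : c < tseq (k+1) := htm (Nat.lt_succ_self k)
    have hc0 : (0:ℝ) ≤ c := (htp k).le
    have hev : ∀ᶠ y in 𝓝[>] c, u' y - u' c = ∫ s in Ioc c y, F s := by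
      filter_upwards [Ioo_mem_nhdsGT_of_mem (show c ∈ Ico c (tseq (k+1)) from ⟨le_rfl, hck⟩)]
        with y hy
      have h1 : u' y - u' c = ∫ s in c..y, F s := by
        refine hAC c y hc0 hy.1.le fun j => ?_
        rintro ⟨hj1, hj2⟩
        have hjk : k < j := htm.lt_iff_lt.mp hj1
        have : tseq (k+1) ≤ tseq j := htm.monotone hjk
        exact absurd (hj2.trans_lt hy.2) (not_lt.mpr this)
      rw [h1, intervalIntegral.integral_of_le hy.1.le]
    have hlhs : Tendsto (fun y => u' y - u' c) (𝓝[>] c) (𝓝 (a k)) := by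
      have := (hj1 k).sub_const (u' c)
      simpa [hcdef] using this
    have hrhs : Tendsto (fun y => ∫ s in Ioc c y, F s) (𝓝[>] c) (𝓝 0) := by
      have hcont := intervalIntegral.continuousOn_primitive
        (f := F) (μ := volume) (a := c) (b := c + 1)
        (hFi.mono_set fun s hs => hc0.trans hs.1)
      have h0 : (∫ s in Ioc c c, F s) = 0 := by simp
      have := (hcont c ⟨le_rfl, by linarith⟩).mono
        (Ioo_subset_Icc_self (a := c) (b := c + 1))
      rw [← nhdsWithin_Ioo_eq_nhdsGT (show c < c + 1 by linarith)] at *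
      have htd := this.tendsto
      simpa [h0] using htd
    exact tendsto_nhds_unique (Tendsto.congr' hev hlhs) hrhs
  -- step C : u' s = B - ∫_{Ioi s} F
  have stepC : ∀ s : ℝ, 0 ≤ s → u' s = B - ∫ τ in Ioi s, F τ := by
    intro s hs
    have h1 : ∀ᶠ y in atTop, u' y = u' s + ∫ τ in s..y, F τ := by
      filter_upwards [eventually_ge_atTop s] with y hy
      have := stepB s y hs hy
      linarith
    have h2 : Tendsto (fun y => u' s + ∫ τ in s..y, F τ) atTop
        (𝓝 (u' s + ∫ τ in Ioi s, F τ)) := by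
      refine tendsto_const_nhds.add ?_
      exact intervalIntegral_tendsto_integral_Ioi s
        (hFi.mono_set fun τ hτ => (hs.trans hτ.le : (0:ℝ) ≤ τ)) tendsto_id
    have := tendsto_nhds_unique (huB.congr' h1) h2
    linarith
  -- continuity of u on impulse-free closed intervals, with left-continuity at right end
  have hcontOn : ∀ z t : ℝ, 0 ≤ z → z ≤ t →
      (∀ k, ¬(z ≤ tseq k ∧ tseq k < t)) → ContinuousOn u (Icc z t) := by
    intro z t hz hzt hni s hs
    by_cases hr : s ∈ range tseq
    · obtain ⟨k, rfl⟩ := hr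
      have hst : tseq k = t := by
        rcases lt_or_eq_of_le hs.2 with hlt | heq
        · exact absurd ⟨hs.1, hlt⟩ (hni k)
        · exact heq
      have h1 : ContinuousWithinAt u (Iio (tseq k)) (tseq k) := hulc k
      have h2 : ContinuousWithinAt u (Iio (tseq k) ∪ {tseq k}) (tseq k) :=
        h1.union continuousWithinAt_singleton
      refine (h2.mono fun w hw => ?_)
      rcases lt_or_eq_of_le (hst ▸ hw.2) with hlt | heq
      · exact Or.inl hlt
      · exact Or.inr (by simp [heq, hst])
    · exact ((hucont s (hz.trans hs.1) hr).mono (fun w hw => hz.trans hw.1))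
  -- step D : representation of u via integral of u' and jumps
  have stepD : ∀ m : ℕ, ∀ t : ℝ, 0 ≤ t → (∀ k, tseq k < t → k < m) →
      (∀ k, k < m → tseq k < t) →
      u t = u 0 + (∫ s in (0:ℝ)..t, u' s) + ∑ k ∈ Finset.range m, b k := by
    intro m
    induction m with
    | zero =>
      intro t ht h1 _
      have hni : ∀ k, ¬((0:ℝ) ≤ tseq k ∧ tseq k < t) := fun k hk =>
        Nat.not_lt_zero k (h1 k hk.2)
      have hderiv' : ∀ s ∈ Ioo (0:ℝ) t, HasDerivWithinAt u (u' s) (Ioi s) s := by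
        intro s hs
        have hnr : s ∉ range tseq := by
          rintro ⟨k, rfl⟩
          exact hni k ⟨(htp k).le, hs.2⟩
        exact ((hderiv s hs.1.le hnr).hasDerivAt
          (Ici_mem_nhds hs.1)).hasDerivWithinAt
      have hftc := intervalIntegral.integral_eq_sub_of_hasDeriv_right_of_le ht
        (hcontOn 0 t le_rfl ht hni) hderiv' (hu'ii 0 t le_rfl ht)
      simp only [Finset.range_zero, Finset.sum_empty, add_zero]
      linarith
    | succ m ih =>
      intro t ht h1 h2
      set c := tseq m with hcdef
      have hct : c < t := h2 m (Nat.lt_succ_self m)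
      have hc0 : (0:ℝ) < c := htp m
      -- impulse-free on [z, t] for z ∈ (c, t)
      have hni : ∀ z, c < z → ∀ k, ¬(z ≤ tseq k ∧ tseq k < t) := by
        intro z hcz k hk
        have hkm : k < m + 1 := h1 k hk.2
        have : tseq k ≤ c := htm.monotone (Nat.lt_succ_iff.mp hkm)
        exact absurd (this.trans_lt hcz) (not_lt.mpr hk.1)
      have hev : ∀ᶠ z in 𝓝[>] c, u t - u z = (∫ s in Ioc 0 t, u' s) - ∫ s in Ioc 0 z, u' s := by
        filter_upwards [Ioo_mem_nhdsGT_of_mem (show c ∈ Ico c t from ⟨le_rfl, hct⟩)]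
          with z hz
        have hz0 : (0:ℝ) ≤ z := (hc0.trans hz.1).le
        have hderiv' : ∀ s ∈ Ioo z t, HasDerivWithinAt u (u' s) (Ioi s) s := by
          intro s hs
          have hnr : s ∉ range tseq := by
            rintro ⟨k, rfl⟩
            exact hni z hz.1 k ⟨hs.1.le, hs.2⟩
          exact ((hderiv s (hz0.trans hs.1.le) hnr).hasDerivAt
            (Ici_mem_nhds (hz0.trans_lt hs.1))).hasDerivWithinAt
        have hftc := intervalIntegral.integral_eq_sub_of_hasDeriv_right_of_le hz.2.le
          (hcontOn z t hz0 hz.2.le (hni z hz.1)) hderiv' (hu'ii z t hz0 hz.2.le)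
        have hadj := intervalIntegral.integral_add_adjacent_intervals
          (hu'ii 0 z le_rfl hz0) (hu'ii z t hz0 hz.2.le)
        rw [← intervalIntegral.integral_of_le ht, ← intervalIntegral.integral_of_le hz0]
        linarith
      have hlhs : Tendsto (fun z => u t - u z) (𝓝[>] c) (𝓝 (u t - (u c + b m))) :=
        tendsto_const_nhds.sub (hj0 m)
      have hrhs : Tendsto (fun z => (∫ s in Ioc 0 t, u' s) - ∫ s in Ioc 0 z, u' s) (𝓝[>] c)
          (𝓝 ((∫ s in Ioc 0 t, u' s) - ∫ s in Ioc 0 c, u' s)) := by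
        refine tendsto_const_nhds.sub ?_
        have hcont := intervalIntegral.continuousOn_primitive
          (f := u') (μ := volume) (a := 0) (b := t)
          (by rw [← intervalIntegrable_iff_integrableOn_Icc_of_le ht]
              exact hu'ii 0 t le_rfl ht)
        have := (hcont c ⟨hc0.le, hct.le⟩).mono
          (fun w (hw : w ∈ Ioo c t) => ⟨(hc0.trans hw.1).le, hw.2.le⟩)
        rw [← nhdsWithin_Ioo_eq_nhdsGT hct] 
        exact this.tendsto
      have heq := tendsto_nhds_unique (Tendsto.congr' hev hlhs) hrhs
      have hihc := ih c hc0.le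
        (fun k hk => htm.lt_iff_lt.mp hk)
        (fun k hk => htm hk)
      have hadj := intervalIntegral.integral_add_adjacent_intervals
        (hu'ii 0 c le_rfl hc0.le) (hu'ii c t hc0.le hct.le)
      rw [Finset.sum_range_succ]
      have e1 : (∫ s in (0:ℝ)..t, u' s) = ∫ s in Ioc 0 t, u' s :=
        intervalIntegral.integral_of_le ht
      have e2 : (∫ s in (0:ℝ)..c, u' s) = ∫ s in Ioc 0 c, u' s :=
        intervalIntegral.integral_of_le hc0.le
      linarith
  -- Fubini
  have fub : ∀ t : ℝ, 0 ≤ t →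
      (∫ s in Ioc (0:ℝ) t, (∫ τ in Ioi s, F τ)) = ∫ τ in Ioi (0:ℝ), min t τ * F τ := by
    intro t ht
    set μ := volume.restrict (Ioc (0:ℝ) t) with hμ
    set ν := volume.restrict (Ioi (0:ℝ)) with hν
    set f : ℝ → ℝ → ℝ := fun s τ => if s < τ then F τ else 0 with hfdef
    have hmeasf : Measurable (Function.uncurry f) :=
      Measurable.ite (measurableSet_lt measurable_fst measurable_snd)
        (hFm.comp measurable_snd) measurable_const
    have hFiν : Integrable F ν := hFi.mono_set Ioi_subset_Ici_self
    have hslice : ∀ s : ℝ, (fun τ => f s τ) = (Ioi s).indicator F := by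
      intro s; ext τ; simp [hfdef, Set.indicator_apply, mem_Ioi]
    have hint : Integrable (Function.uncurry f) (μ.prod ν) := by
      rw [integrable_prod_iff hmeasf.aestronglyMeasurable]
      constructor
      · refine Eventually.of_forall fun s => ?_
        have : (fun τ => Function.uncurry f (s, τ)) = (Ioi s).indicator F := hslice s
        rw [this]
        exact hFiν.indicator measurableSet_Ioi
      · refine Integrable.mono' (g := fun _ => ∫ τ, ‖F τ‖ ∂ν)
          (integrableOn_const measure_Ioc_lt_top.ne)
          ((hmeasf.norm.aestronglyMeasurable).integral_prod_right') ?_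
        refine Eventually.of_forall fun s => ?_
        rw [Real.norm_eq_abs, abs_of_nonneg (integral_nonneg fun τ => norm_nonneg _)]
        refine integral_mono ?_ hFiν.norm fun τ => ?_
        · have heq : (fun τ => ‖Function.uncurry f (s, τ)‖) = fun τ => ‖(Ioi s).indicator F τ‖ := by
            funext τ
            rw [Function.uncurry_apply_pair, congrFun (hslice s) τ]
          rw [heq]
          exact ((hFiν.indicator measurableSet_Ioi).norm)
        · simp only [Function.uncurry, hfdef]
          split <;> simp [abs_nonneg]
    have hswap := integral_integral_swap hint
    have hL : (∫ s, (∫ τ, f s τ ∂ν) ∂μ) = ∫ s in Ioc (0:ℝ) t, (∫ τ in Ioi s, F τ) := by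
      refine setIntegral_congr_fun measurableSet_Ioc fun s hs => ?_
      rw [hslice s, integral_indicator measurableSet_Ioi, hν,
        Measure.restrict_restrict measurableSet_Ioi,
        inter_eq_left.mpr (Ioi_subset_Ioi hs.1.le)]
    have hR : (∫ τ, (∫ s, f s τ ∂μ) ∂ν) = ∫ τ in Ioi (0:ℝ), min t τ * F τ := by
      refine setIntegral_congr_fun measurableSet_Ioi fun τ hτ => ?_
      have hτ0 : (0:ℝ) < τ := hτ
      have hind : (fun s => f s τ) = (Iio τ).indicator (fun _ => F τ) := by
        ext s; simp [hfdef, Set.indicator_apply, mem_Iio]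
      rw [hind, integral_indicator measurableSet_Iio, hμ,
        Measure.restrict_restrict measurableSet_Iio, setIntegral_const]
      have hvol : (volume (Iio τ ∩ Ioc 0 t)).toReal = min t τ := by
        rcases le_or_gt τ t with hcase | hcase
        · have hset : Iio τ ∩ Ioc 0 t = Ioo 0 τ := by
            ext s
            simp only [mem_inter_iff, mem_Iio, mem_Ioc, mem_Ioo]
            exact ⟨fun ⟨h1, h2, _⟩ => ⟨h2, h1⟩, fun ⟨h1, h2⟩ => ⟨h2, h1, h2.le.trans hcase⟩⟩
          rw [hset, Real.volume_Ioo, ENNReal.toReal_ofReal (by linarith), min_eq_right hcase]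
          ring
        · have hset : Iio τ ∩ Ioc 0 t = Ioc 0 t := by
            ext s
            simp only [mem_inter_iff, mem_Iio, mem_Ioc]
            exact ⟨fun ⟨_, h2, h3⟩ => ⟨h2, h3⟩, fun ⟨h2, h3⟩ => ⟨h3.trans_lt hcase, h2, h3⟩⟩
          rw [hset, Real.volume_Ioc, ENNReal.toReal_ofReal (by linarith), min_eq_left hcase.le]
          ring
      rw [measureReal_def, hvol, smul_eq_mul]
    rw [hL] at hswap
    rw [hswap, hR]
  -- final assembly
  intro t ht
  have ht' : (0:ℝ) ≤ t := ht
  have hex : ∃ m : ℕ, t ≤ tseq m := by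
    obtain ⟨m, hm⟩ := hfin t; exact ⟨m, (hm m le_rfl).le⟩
  set m := Nat.find hex with hmdef
  have hm1 : ∀ k, tseq k < t → k < m := by
    intro k hk
    by_contra hle
    push_neg at hle
    exact absurd ((Nat.find_spec hex).trans (htm.monotone hle)) (not_le.mpr hk)
  have hm2 : ∀ k, k < m → tseq k < t := fun k hk => not_le.mp (Nat.find_min hex hk)
  have hD := stepD m t ht hm1 hm2
  have hΦeq : ∀ s ∈ Icc (0:ℝ) t, (∫ τ in Ioi s, F τ)
      = (∫ τ in Ioi (0:ℝ), F τ) - ∫ τ in Ioc (0:ℝ) s, F τ := by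
    intro s hs
    have hsplit : (∫ τ in Ioc (0:ℝ) s, F τ) + (∫ τ in Ioi s, F τ) = ∫ τ in Ioi (0:ℝ), F τ := by
      rw [← setIntegral_union (Ioc_disjoint_Ioi le_rfl) measurableSet_Ioi
        (hFi.mono_set (fun τ hτ => hτ.1.le)) (hFi.mono_set (fun τ hτ => hs.1.trans (le_of_lt hτ))),
        Ioc_union_Ioi_eq_Ioi hs.1]
    linarith
  have hu'congr : ∫ s in (0:ℝ)..t, u' s
      = B * t - ∫ s in Ioc (0:ℝ) t, (∫ τ in Ioi s, F τ) := by
    have h1 : (∫ s in (0:ℝ)..t, u' s) = ∫ s in Ioc (0:ℝ) t, u' s :=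
      intervalIntegral.integral_of_le ht
    have h2 : (∫ s in Ioc (0:ℝ) t, u' s)
        = ∫ s in Ioc (0:ℝ) t, (B - ∫ τ in Ioi s, F τ) :=
      setIntegral_congr_fun measurableSet_Ioc fun s hs => stepC s hs.1.le
    have hΦi : IntegrableOn (fun s => ∫ τ in Ioi s, F τ) (Ioc 0 t) := by
      have hcontP := intervalIntegral.continuousOn_primitive (f := F) (μ := volume)
        (a := 0) (b := t) (hFi.mono_set (fun τ hτ => hτ.1))
      have hcontΦ : ContinuousOn (fun s => ∫ τ in Ioi s, F τ) (Icc 0 t) :=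
        (continuousOn_const.sub hcontP).congr fun s hs => hΦeq s hs
      exact (hcontΦ.integrableOn_compact isCompact_Icc).mono_set Ioc_subset_Icc_self
    rw [h1, h2, integral_sub (integrableOn_const (C := B) measure_Ioc_lt_top.ne) hΦi,
      setIntegral_const, smul_eq_mul, measureReal_def, Real.volume_Ioc,
      ENNReal.toReal_ofReal (by linarith [ht'] : (0:ℝ) ≤ t - 0)]
    ring_nf
  have hts1 : (∑' k, a k) = 0 := by simp [ha0]
  have hts2 : (∑' k, if tseq k < t then b k + a k * (t - tseq k) else 0)
      = ∑ k ∈ Finset.range m, b k := by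
    have h1 : ∀ k, (if tseq k < t then b k + a k * (t - tseq k) else 0)
        = if tseq k < t then b k else 0 := by
      intro k; simp [ha0 k]
    rw [tsum_congr h1, tsum_eq_sum (s := Finset.range m)
      (fun k hk => if_neg (fun hlt => hk (Finset.mem_range.mpr (hm1 k hlt))))]
    exact Finset.sum_congr rfl fun k hk => if_pos (hm2 k (Finset.mem_range.mp hk))
  have hneg : (∫ s in Ioi (0:ℝ), (-(min t s)) * F s)
      = - ∫ s in Ioi (0:ℝ), min t s * F s := by
    rw [← integral_neg]
    exact setIntegral_congr_fun measurableSet_Ioi fun s _ => by ring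
  rw [hu'congr, fub t ht] at hD
  rw [hts1, hts2, hneg, hD, hu0]
  ring

set_option maxHeartbeats 1000000 in
lemma caratheodory_comp_integrable
    (f : ℝ → ℝ → ℝ → ℝ → ℝ → ℝ) (hf : L1Caratheodory f)
    (u v u' v' : ℝ → ℝ)
    (hum : AEMeasurable u (volume.restrict (Ici (0:ℝ))))
    (hvm : AEMeasurable v (volume.restrict (Ici (0:ℝ))))
    (hu'm : AEMeasurable u' (volume.restrict (Ici (0:ℝ))))
    (hv'm : AEMeasurable v' (volume.restrict (Ici (0:ℝ))))
    (ρ : ℝ) (hρ : 0 < ρ)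
    (hub : ∀ t ∈ Ici (0:ℝ), |u t| ≤ ρ * (1 + t))
    (hu'b : ∀ t ∈ Ici (0:ℝ), |u' t| ≤ ρ)
    (hvb : ∀ t ∈ Ici (0:ℝ), |v t| ≤ ρ * (1 + t))
    (hv'b : ∀ t ∈ Ici (0:ℝ), |v' t| ≤ ρ) :
    AEMeasurable (fun t => f t (u t) (v t) (u' t) (v' t)) (volume.restrict (Ici (0:ℝ))) ∧
    IntegrableOn (fun t => f t (u t) (v t) (u' t) (v' t)) (Ici (0:ℝ)) := by
  have hg : AEMeasurable (fun t => (u t, v t, u' t, v' t)) (volume.restrict (Ici (0:ℝ))) :=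
    hum.prodMk (hvm.prodMk (hu'm.prodMk hv'm))
  have hae : AEMeasurable (fun t => f t (u t) (v t) (u' t) (v' t))
      (volume.restrict (Ici (0:ℝ))) :=
    caratheodory_aemeasurable (fun t p => f t p.1 p.2.1 p.2.2.1 p.2.2.2)
      (fun p => hf.1 p.1 p.2.1 p.2.2.1 p.2.2.2) hf.2.1 hg
  refine ⟨hae, ?_⟩
  obtain ⟨φ, hφ0, hφi, hφb⟩ := hf.2.2 ρ hρ
  refine Integrable.mono' hφi hae.aestronglyMeasurable ?_
  filter_upwards [hφb, ae_restrict_mem measurableSet_Ici] with t hbt htmem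
  rw [Real.norm_eq_abs]
  exact hbt (u t) (v t) (u' t) (v' t) (hub t htmem) (hvb t htmem)
    (hu'b t htmem) (hv'b t htmem)

/-- Conversely, if `(u,v)` (with bounds `ρ`) solves the impulsive
boundary value problem — `u'' = f(t,u,v,u',v')` a.e. off `{t_k}`,
`v'' = h(t,u,v,u',v')` a.e. off `{τ_j}`, `u(0) = A₁`, `v(0) = A₂`, `u'(+∞) = B₁`,
`v'(+∞) = B₂`, with the jump conditions and with `u'`, `v'` absolutely continuous
between consecutive impulse points (expressed by the fundamental theorem of calculus
on impulse-free intervals) — then `u` and `v` satisfy the integral representation with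
Green's function `G(t,s) = -min t s`. -/
theorem solution_implies_representation
    (f h : ℝ → ℝ → ℝ → ℝ → ℝ → ℝ)
    (hf : L1Caratheodory f) (hh : L1Caratheodory h)
    (I0 I1 J0 J1 : ℕ → ℝ → ℝ → ℝ → ℝ)
    (hI0 : CaratheodorySeq I0) (hI1 : CaratheodorySeq I1)
    (hJ0 : CaratheodorySeq J0) (hJ1 : CaratheodorySeq J1)
    (tseq τseq : ℕ → ℝ)
    (htm : StrictMono tseq) (htp : ∀ k, 0 < tseq k) (htt : Tendsto tseq atTop atTop)
    (hτm : StrictMono τseq) (hτp : ∀ j, 0 < τseq j) (hτt : Tendsto τseq atTop atTop)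
    (A₁ A₂ B₁ B₂ : ℝ) (u u' v v' : ℝ → ℝ)
    (hu : MemX tseq u u') (hv : MemX τseq v v')
    (ρ : ℝ) (hρ : 0 < ρ)
    (hub : ∀ t ∈ Ici (0:ℝ), |u t| < ρ * (1 + t) ∧ |u' t| < ρ)
    (hvb : ∀ t ∈ Ici (0:ℝ), |v t| < ρ * (1 + t) ∧ |v' t| < ρ)
    (hodeu : ∀ᵐ t ∂(volume.restrict (Ici (0:ℝ))), t ∉ range tseq →
      HasDerivAt u' (f t (u t) (v t) (u' t) (v' t)) t)
    (hodev : ∀ᵐ t ∂(volume.restrict (Ici (0:ℝ))), t ∉ range τseq →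
      HasDerivAt v' (h t (u t) (v t) (u' t) (v' t)) t)
    (hACu : ∀ x y : ℝ, 0 ≤ x → x ≤ y → (∀ k, ¬(x < tseq k ∧ tseq k ≤ y)) →
      u' y - u' x = ∫ s in x..y, f s (u s) (v s) (u' s) (v' s))
    (hACv : ∀ x y : ℝ, 0 ≤ x → x ≤ y → (∀ j, ¬(x < τseq j ∧ τseq j ≤ y)) →
      v' y - v' x = ∫ s in x..y, h s (u s) (v s) (u' s) (v' s))
    (hu0 : u 0 = A₁) (hv0 : v 0 = A₂)
    (huB : Tendsto u' atTop (𝓝 B₁)) (hvB : Tendsto v' atTop (𝓝 B₂))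
    (hjump0u : ∀ k, Tendsto u (𝓝[>] (tseq k))
      (𝓝 (u (tseq k) + I0 k (tseq k) (u (tseq k)) (u' (tseq k)))))
    (hjump1u : ∀ k, Tendsto u' (𝓝[>] (tseq k))
      (𝓝 (u' (tseq k) + I1 k (tseq k) (u (tseq k)) (u' (tseq k)))))
    (hjump0v : ∀ j, Tendsto v (𝓝[>] (τseq j))
      (𝓝 (v (τseq j) + J0 j (τseq j) (v (τseq j)) (v' (τseq j)))))
    (hjump1v : ∀ j, Tendsto v' (𝓝[>] (τseq j))
      (𝓝 (v' (τseq j) + J1 j (τseq j) (v (τseq j)) (v' (τseq j))))) :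
    (∀ t ∈ Ici (0:ℝ), u t = A₁ + B₁ * t
      + ((∑' k, if tseq k < t then
            I0 k (tseq k) (u (tseq k)) (u' (tseq k))
              + I1 k (tseq k) (u (tseq k)) (u' (tseq k)) * (t - tseq k) else 0)
          - t * ∑' k, I1 k (tseq k) (u (tseq k)) (u' (tseq k)))
      + ∫ s in Ioi (0:ℝ), (-(min t s)) * f s (u s) (v s) (u' s) (v' s)) ∧
    (∀ t ∈ Ici (0:ℝ), v t = A₂ + B₂ * t
      + ((∑' j, if τseq j < t then
            J0 j (τseq j) (v (τseq j)) (v' (τseq j))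
              + J1 j (τseq j) (v (τseq j)) (v' (τseq j)) * (t - τseq j) else 0)
          - t * ∑' j, J1 j (τseq j) (v (τseq j)) (v' (τseq j)))
      + ∫ s in Ioi (0:ℝ), (-(min t s)) * h s (u s) (v s) (u' s) (v' s)) := by
  have hum := pc_aemeasurable tseq u hu.1.1
  have hu'm := pc_aemeasurable tseq u' hu.2.2.1.1
  have hvm := pc_aemeasurable τseq v hv.1.1
  have hv'm := pc_aemeasurable τseq v' hv.2.2.1.1
  have hub1 : ∀ t ∈ Ici (0:ℝ), |u t| ≤ ρ * (1 + t) := fun t ht => (hub t ht).1.le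
  have hub2 : ∀ t ∈ Ici (0:ℝ), |u' t| ≤ ρ := fun t ht => (hub t ht).2.le
  have hvb1 : ∀ t ∈ Ici (0:ℝ), |v t| ≤ ρ * (1 + t) := fun t ht => (hvb t ht).1.le
  have hvb2 : ∀ t ∈ Ici (0:ℝ), |v' t| ≤ ρ := fun t ht => (hvb t ht).2.le
  obtain ⟨hFae, hFint⟩ := caratheodory_comp_integrable f hf u v u' v'
    hum hvm hu'm hv'm ρ hρ hub1 hub2 hvb1 hvb2
  obtain ⟨hHae, hHint⟩ := caratheodory_comp_integrable h hh u v u' v'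
    hum hvm hu'm hv'm ρ hρ hub1 hub2 hvb1 hvb2
  set F₀ := hFae.mk _ with hF₀def
  set H₀ := hHae.mk _ with hH₀def
  have heqF : (fun t => f t (u t) (v t) (u' t) (v' t)) =ᵐ[volume.restrict (Ici (0:ℝ))] F₀ :=
    hFae.ae_eq_mk
  have heqH : (fun t => h t (u t) (v t) (u' t) (v' t)) =ᵐ[volume.restrict (Ici (0:ℝ))] H₀ :=
    hHae.ae_eq_mk
  have hF₀i : IntegrableOn F₀ (Ici (0:ℝ)) := hFint.congr heqF
  have hH₀i : IntegrableOn H₀ (Ici (0:ℝ)) := hHint.congr heqH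
  have hACu' : ∀ x y : ℝ, 0 ≤ x → x ≤ y → (∀ k, ¬(x < tseq k ∧ tseq k ≤ y)) →
      u' y - u' x = ∫ s in x..y, F₀ s := by
    intro x y hx hxy hcond
    have hcg : (∫ s in x..y, f s (u s) (v s) (u' s) (v' s)) = ∫ s in x..y, F₀ s := by
      rw [intervalIntegral.integral_of_le hxy, intervalIntegral.integral_of_le hxy]
      exact integral_congr_ae
        (ae_restrict_of_ae_restrict_of_subset (fun s hs => hx.trans hs.1.le) heqF)
    rw [← hcg]
    exact hACu x y hx hxy hcond
  have hACv' : ∀ x y : ℝ, 0 ≤ x → x ≤ y → (∀ j, ¬(x < τseq j ∧ τseq j ≤ y)) →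
      v' y - v' x = ∫ s in x..y, H₀ s := by
    intro x y hx hxy hcond
    have hcg : (∫ s in x..y, h s (u s) (v s) (u' s) (v' s)) = ∫ s in x..y, H₀ s := by
      rw [intervalIntegral.integral_of_le hxy, intervalIntegral.integral_of_le hxy]
      exact integral_congr_ae
        (ae_restrict_of_ae_restrict_of_subset (fun s hs => hx.trans hs.1.le) heqH)
    rw [← hcg]
    exact hACv x y hx hxy hcond
  have hrepU := main_aux F₀ hFae.measurable_mk hF₀i tseq htm htp htt u u' A₁ B₁
    (fun k => I1 k (tseq k) (u (tseq k)) (u' (tseq k)))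
    (fun k => I0 k (tseq k) (u (tseq k)) (u' (tseq k)))
    hu.1.1 hu.1.2.1 hu.2.1 hu.2.2.1.1 hu.2.2.1.2.1 ρ hub2
    hACu' huB hu0 hjump0u hjump1u
  have hrepV := main_aux H₀ hHae.measurable_mk hH₀i τseq hτm hτp hτt v v' A₂ B₂
    (fun j => J1 j (τseq j) (v (τseq j)) (v' (τseq j)))
    (fun j => J0 j (τseq j) (v (τseq j)) (v' (τseq j)))
    hv.1.1 hv.1.2.1 hv.2.1 hv.2.2.1.1 hv.2.2.1.2.1 ρ hvb2
    hACv' hvB hv0 hjump0v hjump1v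
  constructor
  · intro t ht
    have hint : (∫ s in Ioi (0:ℝ), (-(min t s)) * f s (u s) (v s) (u' s) (v' s))
        = ∫ s in Ioi (0:ℝ), (-(min t s)) * F₀ s :=
      integral_congr_ae ((ae_restrict_of_ae_restrict_of_subset Ioi_subset_Ici_self heqF).mono
        fun s hs => by
          dsimp only
          rw [show f s (u s) (v s) (u' s) (v' s) = F₀ s from hs])
    rw [hint]
    exact hrepU t ht
  · intro t ht
    have hint : (∫ s in Ioi (0:ℝ), (-(min t s)) * h s (u s) (v s) (u' s) (v' s))
        = ∫ s in Ioi (0:ℝ), (-(min t s)) * H₀ s :=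
      integral_congr_ae ((ae_restrict_of_ae_restrict_of_subset Ioi_subset_Ici_self heqH).mono
        fun s hs => by
          dsimp only
          rw [show h s (u s) (v s) (u' s) (v' s) = H₀ s from hs])
    rw [hint]
    exact hrepV t ht
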